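/- Let Z be a countable well partially ordered set (a partial order that is a well-quasi-ordering) and let n ∈ ℕ. For every z ∈ Z, rk(z) < ω·n if and only if z ∈ A_n(Z). -/

import Mathlib

/-- A quasi-ordered set is a well-quasi-ordering if every infinite sequence
contains an increasing pair. -/
def IsWqo (X : Type*) [Preorder X] : Prop :=
  ∀ f : ℕ → X, ∃ i j : ℕ, i < j ∧ f i ≤ f j

/-- The ordinal rank of an element of a preorder: `rk z = sup {rk y + 1 : y < z}`
when the strict order is well-founded (and `0` otherwise, by convention). -/
noncomputable def rk {Z : Type*} [Preorder Z] (z : Z) : Ordinal :=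
  @dite _ (WellFounded ((· < ·) : Z → Z → Prop)) (Classical.dec _)
    (fun h => (h.apply z).rank) (fun _ => 0)

/-- `AccelSet Z 0 = ∅` and `AccelSet Z (n+1)` is the set of `z` such that every
acceleration candidate (infinite strictly increasing sequence) below `z` goes
through `AccelSet Z n`. -/
def AccelSet (Z : Type*) [PartialOrder Z] : ℕ → Set Z
  | 0 => ∅
  | n + 1 => {z : Z | ∀ f : ℕ → Z,
      (∀ i, f i < f (i + 1)) → (∀ i, f i ≤ z) → ∃ i, f i ∈ AccelSet Z n}

/-!
Along a strictly increasing chain the rank goes up by at least one at each step, so a chain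
below `z` all of whose elements have rank `≥ ω·n` forces `rk z ≥ ω·n + ω = ω·(n+1)`.
Conversely, if `rk z ≥ a + ω`, pick `y k < z` with `rk (y k) ≥ a + k`. In a wqo some
subsequence of `y` is strictly increasing, which is a chain below `z` of ranks `≥ a`, or
constant, in which case its value `y < z` already has rank `≥ a + ω` and we recurse on it by
well-foundedness. So `z ∉ A_{n+1}` iff `rk z ≥ ω·(n+1)`, by induction on `n`.
-/

open Ordinal

theorem Ordinal.add_omega0_le_iff {a b : Ordinal} : a + ω ≤ b ↔ ∀ k : ℕ, a + k ≤ b := by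
  rw [add_le_iff_of_isSuccLimit isSuccLimit_omega0]
  refine ⟨fun h k ↦ h k (natCast_lt_omega0 k), fun h d hd ↦ ?_⟩
  obtain ⟨k, rfl⟩ := lt_omega0.1 hd
  exact h k

theorem exists_strictMono_or_const_subseq {α : Type*} [PartialOrder α] [WellQuasiOrderedLE α]
    (f : ℕ → α) : ∃ g : ℕ ↪o ℕ, StrictMono (f ∘ g) ∨ ∀ n, f (g n) = f (g 0) := by
  obtain ⟨g₁, hg₁⟩ := wellQuasiOrdered_le.exists_monotone_subseq f
  obtain ⟨g₂, hlt | hnlt⟩ := exists_increasing_or_nonincreasing_subseq (· < ·) (f ∘ g₁)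
  · exact ⟨g₂.trans g₁, Or.inl fun m n hmn ↦ hlt m n hmn⟩
  · refine ⟨g₂.trans g₁, Or.inr fun n ↦ ?_⟩
    rcases n.eq_zero_or_pos with rfl | hn
    · rfl
    · exact ((hg₁ _ _ (g₂.monotone n.zero_le)).lt_or_eq.resolve_left (hnlt 0 n hn)).symm

section Rank

variable {Z : Type*} [PartialOrder Z]

theorem rk_eq_rank [WellFoundedLT Z] (z : Z) : rk z = IsWellFounded.rank (· < ·) z :=
  dif_pos wellFounded_lt

theorem rk_strictMono [WellFoundedLT Z] : StrictMono (rk (Z := Z)) := by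
  simpa only [funext rk_eq_rank] using WellFoundedLT.rank_strictMono

theorem exists_lt_le_rk_of_lt_rk [WellFoundedLT Z] {z : Z} {c : Ordinal} (h : c < rk z) :
    ∃ y < z, c ≤ rk y := by
  rw [rk_eq_rank, IsWellFounded.rank_eq, Ordinal.lt_iSup_iff] at h
  obtain ⟨⟨y, hy⟩, hc⟩ := h
  exact ⟨y, hy, by rwa [rk_eq_rank, ← Order.lt_succ_iff]⟩

theorem rk_add_omega0_le_of_strictMono [WellFoundedLT Z] {f : ℕ → Z} (hf : StrictMono f)
    {z : Z} (hfz : ∀ i, f i ≤ z) : rk (f 0) + ω ≤ rk z := by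
  have hstep : ∀ k : ℕ, rk (f 0) + k ≤ rk (f k) := by
    intro k
    induction k with
    | zero => simp
    | succ k ih =>
      rw [Nat.cast_succ, ← add_assoc]
      exact Order.add_one_le_of_lt (ih.trans_lt (rk_strictMono (hf k.lt_succ_self)))
  exact add_omega0_le_iff.2 fun k ↦ (hstep k).trans (rk_strictMono.monotone (hfz k))

theorem exists_strictMono_le_of_add_omega0_le_rk [WellQuasiOrderedLE Z] {a : Ordinal} {z : Z}
    (h : a + ω ≤ rk z) :
    ∃ f : ℕ → Z, StrictMono f ∧ (∀ i, f i ≤ z) ∧ ∀ i, a ≤ rk (f i) := by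
  induction z using WellFoundedLT.induction with
  | _ z ih =>
  have hy : ∀ k : ℕ, ∃ y < z, a + k ≤ rk y := fun k ↦
    exists_lt_le_rk_of_lt_rk <| (add_lt_add_right (Nat.cast_lt.2 k.lt_succ_self) a).trans_le
      (add_omega0_le_iff.1 h (k + 1))
  choose y hyz hya using hy
  obtain ⟨g, hmono | hconst⟩ := exists_strictMono_or_const_subseq y
  · exact ⟨y ∘ g, hmono, fun _ ↦ (hyz _).le, fun _ ↦ le_self_add.trans (hya _)⟩
  · have hw : a + ω ≤ rk (y (g 0)) := add_omega0_le_iff.2 fun k ↦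
      calc a + k ≤ a + g k := by gcongr; exact_mod_cast g.strictMono.le_apply
        _ ≤ rk (y (g 0)) := hconst k ▸ hya (g k)
    obtain ⟨f, hf, hfw, hfa⟩ := ih _ (hyz _) hw
    exact ⟨f, hf, fun i ↦ (hfw i).trans (hyz _).le, hfa⟩

theorem add_omega0_le_rk_iff [WellQuasiOrderedLE Z] {a : Ordinal} {z : Z} :
    a + ω ≤ rk z ↔
      ∃ f : ℕ → Z, (∀ i, f i < f (i + 1)) ∧ (∀ i, f i ≤ z) ∧ ∀ i, a ≤ rk (f i) := by
  refine ⟨fun h ↦ ?_, fun ⟨f, hf, hfz, hfa⟩ ↦ ?_⟩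
  · obtain ⟨f, hf, hfz, hfa⟩ := exists_strictMono_le_of_add_omega0_le_rk h
    exact ⟨f, fun i ↦ hf i.lt_succ_self, hfz, hfa⟩
  · exact (add_le_add_left (hfa 0) ω).trans
      (rk_add_omega0_le_of_strictMono (strictMono_nat_of_lt_succ hf) hfz)

end Rank

theorem rank_lt_omega_mul_iff_accelSet_general {Z : Type*} [PartialOrder Z]
    (hwqo : IsWqo Z) (n : ℕ) (z : Z) :
    rk z < Ordinal.omega0 * n ↔ z ∈ AccelSet Z n := by
  have : WellQuasiOrderedLE Z := ⟨hwqo⟩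
  induction n generalizing z with
  | zero => simp [AccelSet]
  | succ n ih =>
    rw [Nat.cast_succ, mul_add_one, ← not_le, add_omega0_le_rk_iff]
    simp only [AccelSet, Set.mem_ofPred_eq, ← ih, not_exists, not_and, not_forall, not_le]

/-- In a countable wpo `Z`, `rk z < ω·n` if and only if `z ∈ A_n(Z)`. -/
theorem rank_lt_omega_mul_iff_accelSet {Z : Type*} [PartialOrder Z] [Countable Z]
    (hwqo : IsWqo Z) (n : ℕ) (z : Z) :
    rk z < Ordinal.omega0 * n ↔ z ∈ AccelSet Z n :=
  rank_lt_omega_mul_iff_accelSet_general hwqo n z
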